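/- arXiv:0810.0862 — 2 statements merged into one kernel-verified Lean document; each statement's English description precedes it below -/
import Mathlib

section
/- The composite B ∘ A : C⁺(G₊₁(v)) → C⁺(G−v) is the zero map; equivalently, im A ⊆ ker B. -/
/-!
Common setup: the lattice cohomology complex of a weighted graph
(Némethi; J. Greene, "A surgery triangle for lattice cohomology").

A finite graph `G` with integer weights on vertices and signs on (multi-)edges is
encoded by its symmetric incidence data `M : V → V → ℤ`: for `u ≠ w` the entry
`M u w` is the signed number of edges joining `u` and `w`, and `M u u = m(u)` is
the weight of `u`.  This is exactly the data of the intersection pairing `(·,·)`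
on `L(G) = ℤ⟨E_u : u ∈ V⟩`, via `M u w = (E_u, E_w)`.
-/

noncomputable section

open Function

/-- A graph with integer vertex weights and signed multi-edges, encoded by the
symmetric pairing data `M u w = (E_u, E_w)` on `L(G)`. -/
structure WGraph (V : Type*) where
  M : V → V → ℤ
  symm : ∀ u w, M u w = M w u

variable {V : Type*} [Fintype V] [DecidableEq V]

/-- Evaluation of `K ∈ Hom(L(G), ℤ)` (recorded by its components `K u = K(E_u)`)
on a lattice vector `x = ∑ x_u E_u ∈ L(G)`. -/
def evalK (K x : V → ℤ) : ℤ := ∑ u, K u * x u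

/-- `E_T = ∑_{j ∈ T} E_j ∈ L(G)`. -/
def eVec (T : Finset V) : V → ℤ := fun u => if u ∈ T then 1 else 0

/-- Splitting a sum over `V` at a vertex `v`. -/
theorem sum_split (v : V) (f : V → ℤ) :
    ∑ u, f u = f v + ∑ u : {u : V // u ≠ v}, f u.1 := by
  rw [Fintype.sum_eq_add_sum_compl v f]
  congr 1
  exact Finset.sum_subtype _ (fun x => by simp) f

namespace WGraph

/-- The symmetric bilinear pairing `(x, y)` on `L(G)`. -/
def pair (G : WGraph V) (x y : V → ℤ) : ℤ := ∑ u, ∑ w, G.M u w * x u * y w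

/-- `K ∈ Hom(L(G),ℤ)` is characteristic: `(K,x) ≡ (x,x) (mod 2)` for all `x ∈ L(G)`. -/
def IsChar (G : WGraph V) (K : V → ℤ) : Prop :=
  ∀ x : V → ℤ, evalK K x ≡ G.pair x x [ZMOD 2]

/-- The set `Char(G)` of characteristic vectors, as a type. -/
def Ch (G : WGraph V) : Type _ := {K : V → ℤ // G.IsChar K}

/-- `K + 2x ∈ Hom(L(G),ℤ)`, for `K ∈ Hom(L(G),ℤ)` and `x ∈ L(G)` (a lattice vector
is viewed in `Hom(L(G),ℤ)` via the pairing). -/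
def chAdd (G : WGraph V) (K x : V → ℤ) : V → ℤ := fun u => K u + 2 * G.pair x (eVec {u})

/-- The difference `q(K + 2x) − q(K) = −((K,x) + (x,x))/2`, where `q(y) = −(y,y)/8`;
it is an integer whenever `K` is characteristic. -/
def qdiff (G : WGraph V) (K x : V → ℤ) : ℤ := (-(evalK K x + G.pair x x)) / 2

/-- The difference `q(K,S) − q(K) = max { q(K + 2E_T) − q(K) : T ⊆ S }`, where
`q(K,S) = max { q(K + 2 ∑_{j∈T} E_j) : T ⊆ S }`. -/
def qrel (G : WGraph V) (K : V → ℤ) (S : Finset V) : ℤ :=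
  S.powerset.sup' (Finset.powerset_nonempty S) fun T => G.qdiff K (eVec T)

/-- `G₊₁(v)`: increase the weight `m(v)` of the vertex `v` by one. -/
def bump (G : WGraph V) (v : V) : WGraph V where
  M u w := if u = v ∧ w = v then G.M u w + 1 else G.M u w
  symm u w := by
    have h := G.symm u w
    by_cases hu : u = v <;> by_cases hw : w = v <;> simp [hu, hw, h] <;>
      exact G.symm _ _

/-- `G − v`: delete the vertex `v` and all incident edges. -/
def delete (G : WGraph V) (v : V) : WGraph {u : V // u ≠ v} where
  M u w := G.M u.1 w.1
  symm u w := G.symm u.1 w.1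

theorem evalK_update (L y : V → ℤ) (v : V) (c : ℤ) :
    evalK (Function.update L v (L v + c)) y = evalK L y + c * y v := by
  unfold evalK
  have h : ∀ u, Function.update L v (L v + c) u * y u
      = L u * y u + (if u = v then c * y u else 0) := by
    intro u
    rcases eq_or_ne u v with hu | hu <;> simp [hu, Function.update] <;> ring
  simp only [h]
  rw [Finset.sum_add_distrib, Finset.sum_ite_eq' Finset.univ v (fun u => c * y u)]
  simp

theorem IsChar.chAdd {G : WGraph V} {K : V → ℤ} (h : G.IsChar K) (x : V → ℤ) :
    G.IsChar (G.chAdd K x) := by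
  intro y
  have key : evalK (G.chAdd K x) y
      = evalK K y + 2 * ∑ u, G.pair x (eVec {u}) * y u := by
    simp only [evalK, WGraph.chAdd, add_mul, mul_assoc]
    rw [Finset.sum_add_distrib, ← Finset.mul_sum]
  have hy := h y
  simp only [Int.ModEq] at hy ⊢
  rw [key]
  omega

theorem pair_bump (G : WGraph V) (v : V) (y : V → ℤ) :
    (G.bump v).pair y y = G.pair y y + y v * y v := by
  unfold pair bump
  have hu : ∀ u w : V, ((if u = v ∧ w = v then G.M u w + 1 else G.M u w) * y u * y w)
      = G.M u w * y u * y w + (if u = v ∧ w = v then y u * y w else 0) := by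
    intro u w
    rcases eq_or_ne u v with h | h <;> rcases eq_or_ne w v with h' | h' <;>
      simp [h, h'] <;> ring
  simp only [hu, Finset.sum_add_distrib]
  congr 1
  have hin : ∀ u : V, (∑ w, if u = v ∧ w = v then y u * y w else 0)
      = if u = v then y u * y v else 0 := by
    intro u
    rcases eq_or_ne u v with h | h
    · simp [h, Finset.sum_ite_eq' Finset.univ v (fun w => y v * y w)]
    · simp [h]
  rw [Finset.sum_congr rfl (fun u _ => hin u),
    Finset.sum_ite_eq' Finset.univ v (fun u => y u * y v)]
  simp

theorem IsChar.bumpUpdate {G : WGraph V} {L : V → ℤ} (h : G.IsChar L) (v : V) (i : ℤ) :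
    (G.bump v).IsChar (Function.update L v (L v + (2 * i + 1))) := by
  intro y
  have h1 := evalK_update L y v (2 * i + 1)
  have h2 := pair_bump G v y
  have hy := h y
  obtain ⟨k, hk⟩ := Int.even_mul_succ_self (y v - 1)
  have hk' : y v * y v - y v = 2 * k := by
    have h5 : (y v - 1) * (y v - 1 + 1) = y v * y v - y v := by ring
    omega
  have h3 : (2 * i + 1) * y v = 2 * (i * y v) + y v := by ring
  simp only [Int.ModEq] at hy ⊢
  rw [h1, h2, h3]
  omega

theorem IsChar.evenUpdate {G : WGraph V} {L : V → ℤ} (h : G.IsChar L) (v : V) (k : ℤ) :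
    G.IsChar (Function.update L v (L v + 2 * k)) := by
  intro y
  have h1 := evalK_update L y v (2 * k)
  have hy := h y
  have h3 : 2 * k * y v = 2 * (k * y v) := by ring
  simp only [Int.ModEq] at hy ⊢
  rw [h1, h3]
  omega

end WGraph

/-- Extension of `K ∈ Hom(L(G−v),ℤ)` to `Hom(L(G),ℤ)` by the value `t` at `v`:
the vector denoted `(K, t)`. -/
def extV (v : V) (K : {u : V // u ≠ v} → ℤ) (t : ℤ) : V → ℤ :=
  fun u => if h : u = v then t else K ⟨u, h⟩

namespace WGraph

theorem IsChar.extChar {G : WGraph V} {v : V} {K : {u : V // u ≠ v} → ℤ}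
    (h : (G.delete v).IsChar K) {t : ℤ} (ht : t ≡ G.M v v [ZMOD 2]) :
    G.IsChar (extV v K t) := by
  intro y
  have h1 : evalK (extV v K t) y = t * y v + evalK K (fun u => y u.1) := by
    unfold evalK
    rw [sum_split v (fun u => extV v K t u * y u)]
    congr 1
    · simp [extV]
    · exact Finset.sum_congr rfl fun u _ => by simp [extV, u.2]
  have h2 : G.pair y y = (G.delete v).pair (fun u => y u.1) (fun u => y u.1)
      + G.M v v * (y v * y v)
      + 2 * ∑ u : {u : V // u ≠ v}, G.M v u.1 * y v * y u.1 := by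
    have step1 : G.pair y y = (∑ w, G.M v w * y v * y w)
        + ∑ u : {u : V // u ≠ v}, ∑ w, G.M u.1 w * y u.1 * y w :=
      sum_split v (fun u => ∑ w, G.M u w * y u * y w)
    have step2 : (∑ w, G.M v w * y v * y w)
        = G.M v v * y v * y v + ∑ w : {w : V // w ≠ v}, G.M v w.1 * y v * y w.1 :=
      sum_split v _
    have step3 : ∀ u : {u : V // u ≠ v}, (∑ w, G.M u.1 w * y u.1 * y w)
        = G.M u.1 v * y u.1 * y v + ∑ w : {w : V // w ≠ v}, G.M u.1 w.1 * y u.1 * y w.1 :=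
      fun u => sum_split v _
    have step4 : (G.delete v).pair (fun u => y u.1) (fun u => y u.1)
        = ∑ u : {u : V // u ≠ v}, ∑ w : {w : V // w ≠ v}, G.M u.1 w.1 * y u.1 * y w.1 := rfl
    have hc : (∑ u : {u : V // u ≠ v}, G.M u.1 v * y u.1 * y v)
        = ∑ u : {u : V // u ≠ v}, G.M v u.1 * y v * y u.1 := by
      refine Finset.sum_congr rfl fun u _ => ?_
      rw [G.symm u.1 v]; ring
    rw [step1, step2, Finset.sum_congr rfl (fun u _ => step3 u),
      Finset.sum_add_distrib, hc, step4]
    ring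
  have hy := h (fun u => y u.1)
  obtain ⟨k, hk⟩ := Int.even_mul_succ_self (y v - 1)
  have hk' : y v * y v - y v = 2 * k := by
    have h5 : (y v - 1) * (y v - 1 + 1) = y v * y v - y v := by ring
    omega
  obtain ⟨a, ha⟩ : (2:ℤ) ∣ t - G.M v v := Int.ModEq.dvd ht.symm
  have e1 : t * y v = G.M v v * y v + 2 * (a * y v) := by
    have h6 : t = G.M v v + 2 * a := by omega
    rw [h6]; ring
  have e2 : G.M v v * (y v * y v) = G.M v v * y v + 2 * (G.M v v * k) := by
    have h7 : y v * y v = y v + 2 * k := by omega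
    rw [h7]; ring
  simp only [Int.ModEq] at hy ⊢
  rw [h1, h2, e1, e2]
  omega

variable {G : WGraph V}

/-- `K + 2x` as a characteristic vector. -/
def Ch.add (K : G.Ch) (x : V → ℤ) : G.Ch := ⟨G.chAdd K.1 x, K.2.chAdd x⟩

/-- For `K = (K', t) ∈ Char(G)`, the characteristic vector
`(K', t + 2i + 1) ∈ Char(G₊₁(v))`. -/
def Ch.bumpSh (K : G.Ch) (v : V) (i : ℤ) : (G.bump v).Ch :=
  ⟨Function.update K.1 v (K.1 v + (2 * i + 1)), K.2.bumpUpdate v i⟩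

/-- For `K = (K', t) ∈ Char(G)`, the characteristic vector `(K', t + 2k) ∈ Char(G)`. -/
def Ch.evenSh (K : G.Ch) (v : V) (k : ℤ) : G.Ch :=
  ⟨Function.update K.1 v (K.1 v + 2 * k), K.2.evenUpdate v k⟩

/-- For `K ∈ Char(G−v)`, the characteristic vector `(K, m(v) + 2i) ∈ Char(G)`. -/
def Ch.extend {v : V} (K : (G.delete v).Ch) (i : ℤ) : G.Ch :=
  ⟨extV v K.1 (G.M v v + 2 * i),
    K.2.extChar (by show (G.M v v + 2 * i) % 2 = G.M v v % 2; omega)⟩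

end WGraph

/-- `𝒯⁺₀ = 𝔽[U,U⁻¹]/(U·𝔽[U])` over `𝔽 = ℤ/2ℤ`: the coefficient at `d ∈ ℕ` records
the coefficient of `U^{−d}`. -/
def Tplus : Type := ℕ →₀ ZMod 2

instance : AddCommGroup Tplus := inferInstanceAs (AddCommGroup (ℕ →₀ ZMod 2))
instance : Module (ZMod 2) Tplus := inferInstanceAs (Module (ZMod 2) (ℕ →₀ ZMod 2))

/-- The element `U^{-m}` of `𝒯⁺₀`. -/
def Um (m : ℕ) : Tplus := (Finsupp.single m 1 : ℕ →₀ ZMod 2)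

/-- Multiplication by `U^e` on `𝒯⁺₀`: `U^e · U^{−d} = U^{−(d−e)}` (which is `0` if `d < e`). -/
def Upow (e : ℤ) (f : Tplus) : Tplus :=
  (Finsupp.comapDomain (fun d : ℕ => (d : ℤ) + e)
    (Finsupp.embDomain ⟨(Nat.cast : ℕ → ℤ), Nat.cast_injective⟩ (f : ℕ →₀ ZMod 2))
    (fun a _ b _ hab => Nat.cast_injective (add_right_cancel hab)) : ℕ →₀ ZMod 2)

theorem Upow_zero (e : ℤ) : Upow e 0 = 0 := by
  show (Finsupp.comapDomain _ (Finsupp.embDomain _ (0 : ℕ →₀ ZMod 2)) _ : ℕ →₀ ZMod 2)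
    = (0 : ℕ →₀ ZMod 2)
  ext d
  simp

/-- `C⁺(G)`: the `𝔽[U]`-module of finitely supported maps `Char(G) × 𝒫(V) → 𝒯⁺₀`. -/
abbrev Cplus (G : WGraph V) : Type _ := (G.Ch × Finset V) →₀ Tplus

/-- The action of (multiplication by) `U` on `C⁺(G)`. -/
def UC (G : WGraph V) (φ : Cplus G) : Cplus G := Finsupp.mapRange (Upow 1) (Upow_zero 1) φ

/-- `U^{−m} · (K,S)^∨`: the element of `C⁺(G)` supported at the single pair `(K,S)`
with value `U^{−m}`. -/
def dual {G : WGraph V} (p : G.Ch × Finset V) (m : ℕ) : Cplus G :=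
  Finsupp.single p (Um m)

/-- The exponent `q(K,S) − q(K, S−w)`. -/
def dExp₁ (G : WGraph V) (K : V → ℤ) (S : Finset V) (w : V) : ℤ :=
  G.qrel K S - G.qrel K (S.erase w)

/-- The exponent `q(K,S) − q(K + 2E_w, S−w)`. -/
def dExp₂ (G : WGraph V) (K : V → ℤ) (S : Finset V) (w : V) : ℤ :=
  G.qrel K S - (G.qdiff K (eVec {w}) + G.qrel (G.chAdd K (eVec {w})) (S.erase w))

/-- `δ` is the operator on `C⁺(G)` given by
`δ(φ)(K,S) = ∑_{w∈S} [U^{q(K,S)−q(K,S−w)}·φ(K,S−w) + U^{q(K,S)−q(K+2E_w,S−w)}·φ(K+2E_w,S−w)]`. -/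
def IsDelta (G : WGraph V) (δ : Cplus G → Cplus G) : Prop :=
  ∀ (φ : Cplus G) (K : G.Ch) (S : Finset V),
    δ φ (K, S) = ∑ w ∈ S,
      (Upow (dExp₁ G K.1 S w) (φ (K, S.erase w))
        + Upow (dExp₂ G K.1 S w) (φ (K.add (eVec {w}), S.erase w)))

/-- The exponent
`c(i,(K,t),S) = [q((K,t),S) − q(K,t)] − [q'((K,t+2i+1),S) − q'(K,t+2i+1)] + i(i+1)/2`. -/
def cExp (G : WGraph V) (v : V) (i : ℤ) (K : G.Ch) (S : Finset V) : ℤ :=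
  G.qrel K.1 S - (G.bump v).qrel (K.bumpSh v i).1 S + i * (i + 1) / 2

/-- `A` is the map `C⁺(G₊₁(v)) → C⁺(G)` given by
`A(φ)((K,t),S) = ∑_{i∈ℤ} U^{c(i,(K,t),S)} · φ((K,t+2i+1),S)`. -/
def IsA (G : WGraph V) (v : V) (A : Cplus (G.bump v) → Cplus G) : Prop :=
  ∀ (φ : Cplus (G.bump v)) (K : G.Ch) (S : Finset V),
    A φ (K, S) = ∑ᶠ i : ℤ, Upow (cExp G v i K S) (φ (K.bumpSh v i, S))

/-- A subset `S ⊆ V − v` viewed as a subset of `V`. -/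
def liftS (v : V) (S : Finset {u : V // u ≠ v}) : Finset V :=
  S.map ⟨Subtype.val, Subtype.val_injective⟩

/-- `B` is the map `C⁺(G) → C⁺(G−v)` given by
`B(φ)(K,S) = ∑_{i∈ℤ} φ((K, m(v)+2i), S)`. -/
def IsB (G : WGraph V) (v : V) (B : Cplus G → Cplus (G.delete v)) : Prop :=
  ∀ (φ : Cplus G) (K : (G.delete v).Ch) (S : Finset {u : V // u ≠ v}),
    B φ (K, S) = ∑ᶠ i : ℤ, φ (K.extend i, liftS v S)

/-- `r((K,t),S) = q((K,t),S−v) − q((K,t)+2E_v,S−v)` (for `v ∈ S`). -/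
def rVal (G : WGraph V) (v : V) (K : G.Ch) (S : Finset V) : ℤ :=
  G.qrel K.1 (S.erase v)
    - (G.qdiff K.1 (eVec {v}) + G.qrel (G.chAdd K.1 (eVec {v})) (S.erase v))

/-- The lattice cohomology `ℍ⁺`: the homology of the complex `(C⁺, δ)`. -/
abbrev Hlat {G : WGraph V} (δ : Cplus G →ₗ[ZMod 2] Cplus G) : Type _ :=
  LinearMap.ker δ ⧸ (LinearMap.range δ).comap (LinearMap.ker δ).subtype

/-- `𝒟₁ ⊆ C⁺(G)`: the `𝔽`-submodule generated by the `U^{−m}·((K,t),S)^∨` with `v ∈ S`. -/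
def D1 (G : WGraph V) (v : V) : Submodule (ZMod 2) (Cplus G) :=
  Submodule.span (ZMod 2)
    {χ | ∃ (K : G.Ch) (S : Finset V) (m : ℕ), v ∈ S ∧ χ = dual (K, S) m}

/-- `𝒟₂ ⊆ C⁺(G)`: the `𝔽`-submodule generated by the
`U^{−m}·[((K,t),S)^∨ + ((K,t+2),S)^∨]` with `v ∉ S`. -/
def D2 (G : WGraph V) (v : V) : Submodule (ZMod 2) (Cplus G) :=
  Submodule.span (ZMod 2)
    {χ | ∃ (K : G.Ch) (S : Finset V) (m : ℕ), v ∉ S ∧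
      χ = dual (K, S) m + dual (K.evenSh v 1, S) m}

/-!
For `v ∉ S` the pairings `q(·,S)` ignore the `v`-coordinate, so the exponent
`c(j,(K,m(v)+2i),S)` is a constant plus the triangular number `j(j+1)/2`, and the summand
`φ((K,m(v)+2i+2j+1),S)` depends only on `i + j`. Hence `(B ∘ A)(φ)(K,S)` is a finite double
sum over `(i,j) ∈ ℤ²` invariant under the fixed-point-free involution
`(i,j) ↦ (i+2j+1, −1−j)`, which preserves both `i + j` and `j(j+1)/2`; over `𝔽 = ℤ/2ℤ` its
terms cancel in pairs.
-/

theorem finsum_eq_zero_of_involutive {α M : Type*} [AddCommMonoid M] [Module (ZMod 2) M]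
    (f : α → M) {σ : α → α} (hσ : Involutive σ) (hfix : ∀ a, σ a ≠ a)
    (hf : ∀ a, f (σ a) = f a) : ∑ᶠ a, f a = 0 := by
  by_cases hfin : (support f).Finite
  · rw [finsum_eq_sum f hfin]
    refine Finset.sum_involution (fun a _ => σ a) (fun a _ => ?_) (fun a _ _ => hfix a)
      (fun a ha => ?_) (fun a _ => hσ a)
    · rw [hf, ← two_smul (ZMod 2), show (2 : ZMod 2) = 0 from rfl, zero_smul]
    · rw [Set.Finite.mem_toFinset, Function.mem_support, hf]
      exact (Set.Finite.mem_toFinset _).1 ha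
  · exact finsum_of_infinite_support hfin

theorem exists_Upow_eq_zero : ∀ x : Tplus, ∃ E : ℤ, ∀ e, E ≤ e → Upow e x = 0 := by
  intro (x : ℕ →₀ ZMod 2)
  refine ⟨(x.support.sup id : ℕ) + 1, fun e he => ?_⟩
  refine Finsupp.ext fun d => ?_
  show (Finsupp.embDomain _ x) ((d : ℤ) + e) = 0
  rw [← Finsupp.notMem_support_iff, Finsupp.support_embDomain, Finset.mem_map]
  rintro ⟨n, hn, hnd⟩
  have : n ≤ x.support.sup id := Finset.le_sup (f := id) hn
  simp only [Function.Embedding.coeFn_mk] at hnd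
  omega

theorem abs_le_mul_add_one_div_two (j : ℤ) : |j| ≤ j * (j + 1) / 2 + 1 := by
  have : 2 * |j| ≤ j * (j + 1) + 2 := by
    rcases le_or_gt 0 j with h | h
    · rw [abs_of_nonneg h]; nlinarith [sq_nonneg (2 * j - 1)]
    · rw [abs_of_neg h]
      rcases eq_or_lt_of_le (Int.le_sub_one_of_lt h) with rfl | h'
      · norm_num
      · nlinarith
  omega

theorem finite_setOf_Upow_triangle_ne_zero (x : Tplus) (C : ℤ) :
    {j : ℤ | Upow (C + j * (j + 1) / 2) x ≠ 0}.Finite := by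
  obtain ⟨E, hE⟩ := exists_Upow_eq_zero x
  refine (Set.finite_Icc (C - E) (E - C)).subset fun j hj => ?_
  have hlt : C + j * (j + 1) / 2 < E := lt_of_not_ge fun h => hj (hE _ h)
  have := abs_le_mul_add_one_div_two j
  rw [abs_le'] at this
  constructor <;> omega

theorem finite_support_Upow_triangle {g : ℤ → Tplus} (hg : (support g).Finite) (C : ℤ) :
    (support fun p : ℤ × ℤ => Upow (C + p.2 * (p.2 + 1) / 2) (g (p.1 + p.2))).Finite := by
  refine (hg.biUnion fun n _ =>
    (finite_setOf_Upow_triangle_ne_zero (g n) C).image fun j => (n - j, j)).subset ?_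
  rintro ⟨i, j⟩ hij
  refine Set.mem_biUnion (x := i + j) (fun hg0 => hij ?_) ⟨j, hij, by simp⟩
  simp only [hg0, Upow_zero]

theorem finsum_finsum_Upow_triangle_eq_zero {g : ℤ → Tplus} (hg : (support g).Finite)
    (C : ℤ) : ∑ᶠ (i : ℤ) (j : ℤ), Upow (C + j * (j + 1) / 2) (g (i + j)) = 0 := by
  rw [← finsum_curry _ (finite_support_Upow_triangle hg C)]
  refine finsum_eq_zero_of_involutive _ (σ := fun p => (p.1 + 2 * p.2 + 1, -1 - p.2))
    (fun p => ?_) (fun p h => ?_) (fun p => ?_)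
  · ext <;> dsimp only <;> ring
  · have := congrArg Prod.snd h
    dsimp only at this
    omega
  · dsimp only
    rw [show (-1 - p.2) * (-1 - p.2 + 1) = p.2 * (p.2 + 1) by ring,
      show p.1 + 2 * p.2 + 1 + (-1 - p.2) = p.1 + p.2 by ring]

namespace WGraph

theorem qrel_congr (G : WGraph V) {L L' : V → ℤ} {S : Finset V} (h : ∀ u ∈ S, L u = L' u) :
    G.qrel L S = G.qrel L' S := by
  refine Finset.sup'_congr _ rfl fun T hT => ?_
  have hTS := Finset.mem_powerset.1 hT
  have heval : evalK L (eVec T) = evalK L' (eVec T) := Finset.sum_congr rfl fun u _ => by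
    by_cases hu : u ∈ T
    · simp [eVec, hu, h u (hTS hu)]
    · simp [eVec, hu]
  simp only [qdiff, heval]

variable {G : WGraph V} {v : V}

theorem Ch.extend_apply_of_ne (K : (G.delete v).Ch) (i : ℤ) {u : V} (hu : u ≠ v) :
    (K.extend i).1 u = K.1 ⟨u, hu⟩ :=
  dif_neg hu

theorem Ch.bumpSh_apply_of_ne (K : G.Ch) (i : ℤ) {u : V} (hu : u ≠ v) :
    (K.bumpSh v i).1 u = K.1 u :=
  Function.update_of_ne hu _ _

theorem Ch.extend_bumpSh_apply_self (K : (G.delete v).Ch) (i j : ℤ) :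
    ((K.extend i).bumpSh v j).1 v = G.M v v + 2 * (i + j) + 1 := by
  simp only [Ch.bumpSh, Ch.extend, extV, ↓reduceDIte, Function.update_self]
  ring

theorem Ch.extend_bumpSh (K : (G.delete v).Ch) (i j : ℤ) :
    (K.extend i).bumpSh v j = (K.extend (i + j)).bumpSh v 0 := by
  refine Subtype.ext (funext fun u => ?_)
  by_cases hu : u = v
  · subst hu
    rw [extend_bumpSh_apply_self, extend_bumpSh_apply_self, add_zero]
  · rw [bumpSh_apply_of_ne _ _ hu, bumpSh_apply_of_ne _ _ hu, extend_apply_of_ne _ _ hu,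
      extend_apply_of_ne _ _ hu]

theorem Ch.injective_extend_bumpSh_zero (K : (G.delete v).Ch) :
    Injective fun n => (K.extend n).bumpSh v 0 := fun a b hab => by
  have := congrArg (fun K' : (G.bump v).Ch => K'.1 v) hab
  simp only [extend_bumpSh_apply_self] at this
  omega

theorem cExp_extend (K : (G.delete v).Ch) {S : Finset V} (hv : v ∉ S) (i j : ℤ) :
    cExp G v j (K.extend i) S = cExp G v 0 (K.extend 0) S + j * (j + 1) / 2 := by
  have hext : ∀ u ∈ S, (K.extend i).1 u = (K.extend 0).1 u := fun u hu => by
    have huv : u ≠ v := ne_of_mem_of_not_mem hu hv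
    rw [Ch.extend_apply_of_ne _ _ huv, Ch.extend_apply_of_ne _ _ huv]
  have hbump : ∀ u ∈ S, ((K.extend i).bumpSh v j).1 u = ((K.extend 0).bumpSh v 0).1 u :=
    fun u hu => by
      have huv : u ≠ v := ne_of_mem_of_not_mem hu hv
      rw [Ch.bumpSh_apply_of_ne _ _ huv, Ch.bumpSh_apply_of_ne _ _ huv, hext u hu]
  simp [cExp, G.qrel_congr hext, (G.bump v).qrel_congr hbump]

end WGraph

/-- The composite `B ∘ A : C⁺(G₊₁(v)) → C⁺(G−v)` is the zero map;
equivalently, `im A ⊆ ker B`. -/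
theorem B_comp_A_eq_zero (G : WGraph V) (v : V)
    (A : Cplus (G.bump v) → Cplus G) (hA : IsA G v A)
    (B : Cplus G → Cplus (G.delete v)) (hB : IsB G v B) :
    ∀ φ : Cplus (G.bump v), B (A φ) = 0 := by
  intro φ
  ext ⟨K, S⟩
  have hv : v ∉ liftS v S := by simp [liftS]
  set g : ℤ → Tplus := fun n => φ ((K.extend n).bumpSh v 0, liftS v S)
  have hg : (support g).Finite :=
    φ.hasFiniteSupport.comp_of_injective
      ((Prod.mk_left_injective (liftS v S)).comp K.injective_extend_bumpSh_zero)
  calc B (A φ) (K, S)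
      = ∑ᶠ (i : ℤ) (j : ℤ), Upow (cExp G v 0 (K.extend 0) (liftS v S) + j * (j + 1) / 2)
          (g (i + j)) := by
        rw [hB]
        refine finsum_congr fun i => ?_
        rw [hA]
        refine finsum_congr fun j => ?_
        rw [WGraph.cExp_extend K hv, WGraph.Ch.extend_bumpSh]
    _ = 0 := finsum_finsum_Upow_triangle_eq_zero hg _

end
end

section
/- If v ∉ S, then A(((K,t+1),S)^∨) = ((K,t),S)^∨ + ((K,t+2),S)^∨ in C⁺(G); in particular A(((K,t+1),S)^∨) vanishes on all pairs ((K',t'),S') not of the form ((K,t+2i),S), and on ((K,t+2i),S) it takes the value 1 if i = 0 or 1 and 0 otherwise. -/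
/-!
Common setup: the lattice cohomology complex of a weighted graph
(Némethi; J. Greene, "A surgery triangle for lattice cohomology").

A finite graph `G` with integer weights on vertices and signs on (multi-)edges is
encoded by its symmetric incidence data `M : V → V → ℤ`: for `u ≠ w` the entry
`M u w` is the signed number of edges joining `u` and `w`, and `M u u = m(u)` is
the weight of `u`.  This is exactly the data of the intersection pairing `(·,·)`
on `L(G) = ℤ⟨E_u : u ∈ V⟩`, via `M u w = (E_u, E_w)`.
-/

noncomputable section

open Function

variable {V : Type*} [Fintype V] [DecidableEq V]

/-!
For `T ⊆ S` with `v ∉ S` the vector `E_T` vanishes at `v`, so raising both `t = K(v)` and the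
weight `m(v)` leaves every difference `q(K + 2E_T) − q(K)` unchanged; hence the exponent
`c(i,(K,t),S)` is the triangular number `i(i+1)/2`. Only `i = 0` and `i = −1` then contribute to
`A(((K,t+1),S)^∨)`, at `(K,t)` and `(K,t+2)`; every other term is killed by a positive power
of `U`.
-/

theorem Upow_zero_left (f : Tplus) : Upow 0 f = f := by
  refine Finsupp.ext fun d => ?_
  simp only [Upow, add_zero]
  rw [Finsupp.comapDomain_apply]
  exact Finsupp.embDomain_apply_self _ _ d

theorem Upow_Um_of_lt {e : ℤ} {m : ℕ} (h : (m : ℤ) < e) : Upow e (Um m) = 0 := by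
  refine Finsupp.ext fun d => ?_
  simp only [Upow, Um]
  rw [Finsupp.comapDomain_apply, Finsupp.embDomain_single, Finsupp.single_apply,
    if_neg (by simp; omega)]
  rfl

theorem Int.mul_add_one_div_two_pos {i : ℤ} (h₀ : i ≠ 0) (h₁ : i ≠ -1) :
    0 < i * (i + 1) / 2 := by
  have : 2 ≤ i * (i + 1) := by
    rcases (by omega : 1 ≤ i ∨ i ≤ -2) with h | h <;> nlinarith
  omega

namespace WGraph

theorem qdiff_bump_update (G : WGraph V) (v : V) (K x : V → ℤ) (c : ℤ) (hx : x v = 0) :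
    (G.bump v).qdiff (update K v (K v + c)) x = G.qdiff K x := by
  simp only [qdiff, evalK_update, pair_bump, hx, mul_zero, add_zero]

theorem qrel_bump_update (G : WGraph V) (v : V) (K : V → ℤ) (c : ℤ) {S : Finset V}
    (hv : v ∉ S) : (G.bump v).qrel (update K v (K v + c)) S = G.qrel K S :=
  Finset.sup'_congr _ rfl fun _ hT =>
    G.qdiff_bump_update v K _ c (if_neg fun hvT => hv (Finset.mem_powerset.1 hT hvT))

variable {G : WGraph V}

namespace Ch

theorem evenSh_zero (K : G.Ch) (v : V) : K.evenSh v 0 = K :=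
  Subtype.ext (by simp [evenSh])

theorem bumpSh_eq_bumpSh_iff (K L : G.Ch) (v : V) (i j : ℤ) :
    K.bumpSh v i = L.bumpSh v j ↔ K = L.evenSh v (j - i) := by
  refine Subtype.ext_iff.trans (funext_iff.trans (Iff.trans (forall_congr' fun u => ?_)
    (funext_iff.symm.trans (Subtype.ext_iff (a1 := K)).symm)))
  rcases eq_or_ne u v with rfl | hu
  · simp only [bumpSh, evenSh, update_self]; omega
  · simp only [bumpSh, evenSh, update_of_ne hu]

end Ch

end WGraph

theorem cExp_of_not_mem (G : WGraph V) (v : V) (i : ℤ) (K : G.Ch) {S : Finset V} (hv : v ∉ S) :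
    cExp G v i K S = i * (i + 1) / 2 := by
  rw [cExp, WGraph.Ch.bumpSh, G.qrel_bump_update v _ _ hv, sub_self, zero_add]

theorem IsA.apply_dual_bumpSh {G : WGraph V} {v : V} {A : Cplus (G.bump v) → Cplus G}
    (hA : IsA G v A) (K : G.Ch) {S : Finset V} (hv : v ∉ S) (K' : G.Ch) (S' : Finset V) :
    A (dual (K.bumpSh v 0, S) 0) (K', S') =
      ∑ᶠ i : ℤ,
        Finsupp.single (K.evenSh v (-i), S) (Upow (i * (i + 1) / 2) (Um 0)) (K', S') := by
  refine (hA _ K' S').trans (finsum_congr fun i => ?_)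
  classical
  have hpair : (K.bumpSh v 0, S) = (K'.bumpSh v i, S') ↔ (K.evenSh v (-i), S) = (K', S') := by
    rw [Prod.mk.injEq, Prod.mk.injEq, eq_comm, K'.bumpSh_eq_bumpSh_iff, zero_sub,
      eq_comm (a := K')]
  rw [dual, Finsupp.single_apply, Finsupp.single_apply, if_congr hpair rfl rfl]
  split_ifs with h
  · rw [← (Prod.mk.inj h).2, cExp_of_not_mem G v i K' hv]
  · exact Upow_zero _

/-- If `v ∉ S`, then `A(((K,t+1),S)^∨) = ((K,t),S)^∨ + ((K,t+2),S)^∨` in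
`C⁺(G)`; in particular `A(((K,t+1),S)^∨)` vanishes on all pairs `((K',t'),S')` not of the
form `((K,t+2i),S)`, and on `((K,t+2i),S)` it takes the value `1` if `i = 0` or `1`, and `0`
otherwise. -/
theorem A_dual_of_not_mem (G : WGraph V) (v : V)
    (A : Cplus (G.bump v) → Cplus G) (hA : IsA G v A)
    (K : G.Ch) (S : Finset V) (hv : v ∉ S) :
    A (dual (K.bumpSh v 0, S) 0) = dual (K, S) 0 + dual (K.evenSh v 1, S) 0 := by
  ext ⟨K', S'⟩
  rw [hA.apply_dual_bumpSh K hv, finsum_eq_sum_of_support_subset (s := {0, -1}),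
    Finset.sum_pair (by norm_num)]
  · simp [Upow_zero_left, K.evenSh_zero, dual]
  · refine Function.support_subset_iff'.2 fun i hi => ?_
    simp only [Finset.coe_pair, Set.mem_insert_iff, Set.mem_singleton_iff, not_or] at hi
    rw [Upow_Um_of_lt (Int.mul_add_one_div_two_pos hi.1 hi.2), Finsupp.single_zero,
      Finsupp.zero_apply]

end
end
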